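/- arXiv:1211.3796 — 5 statements merged into one kernel-verified Lean document; each statement's English description precedes it below -/
import Mathlib

section
/- For all real θ > 0, real I1, and c2, c3, c4 ∈ (−1,1), with h = c2·c3·c4, the full-tensor CRIB expression is at most the unfolded-tensor CRIB expression: θ/(1−h²)·[I1−1 + (c2²c3²+c2²c4²+c3²c4²−3h²)/(1+2h²−c2²c3²−c2²c4²−c3²c4²)] ≤ θ/(1−h²)·[I1−3 + 1/(1−c2²) + 1/(1−c3²c4²)]; moreover equality holds when c2 = 0. -/
/-- The full-tensor order-4 rank-2 CRIB expression is at most the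
`[1,2,(3,4)]`-unfolded CRIB expression, with equality when `c2 = 0`. -/
theorem crib_order4_full_le_unfolded
    (θ I1 c2 c3 c4 : ℝ) (hθ : 0 < θ)
    (h2 : -1 < c2) (h2' : c2 < 1) (h3 : -1 < c3) (h3' : c3 < 1)
    (h4 : -1 < c4) (h4' : c4 < 1) :
    θ / (1 - (c2 * c3 * c4) ^ 2) *
        (I1 - 1 + (c2 ^ 2 * c3 ^ 2 + c2 ^ 2 * c4 ^ 2 + c3 ^ 2 * c4 ^ 2
              - 3 * (c2 * c3 * c4) ^ 2) /
            (1 + 2 * (c2 * c3 * c4) ^ 2 - c2 ^ 2 * c3 ^ 2 - c2 ^ 2 * c4 ^ 2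
              - c3 ^ 2 * c4 ^ 2))
      ≤ θ / (1 - (c2 * c3 * c4) ^ 2) *
          (I1 - 3 + 1 / (1 - c2 ^ 2) + 1 / (1 - c3 ^ 2 * c4 ^ 2)) ∧
    (c2 = 0 →
      θ / (1 - (c2 * c3 * c4) ^ 2) *
          (I1 - 1 + (c2 ^ 2 * c3 ^ 2 + c2 ^ 2 * c4 ^ 2 + c3 ^ 2 * c4 ^ 2
                - 3 * (c2 * c3 * c4) ^ 2) /
              (1 + 2 * (c2 * c3 * c4) ^ 2 - c2 ^ 2 * c3 ^ 2 - c2 ^ 2 * c4 ^ 2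
                - c3 ^ 2 * c4 ^ 2))
        = θ / (1 - (c2 * c3 * c4) ^ 2) *
            (I1 - 3 + 1 / (1 - c2 ^ 2) + 1 / (1 - c3 ^ 2 * c4 ^ 2))) := by
  have ha : c2 ^ 2 < 1 := by nlinarith
  have hb : c3 ^ 2 < 1 := by nlinarith
  have hc : c4 ^ 2 < 1 := by nlinarith
  have hbc : c3 ^ 2 * c4 ^ 2 < 1 := by nlinarith [sq_nonneg c3, sq_nonneg c4]
  have habc : (c2 * c3 * c4) ^ 2 < 1 := by nlinarith [sq_nonneg c2, sq_nonneg (c3 * c4)]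
  have hD : 0 < 1 + 2 * (c2 * c3 * c4) ^ 2 - c2 ^ 2 * c3 ^ 2 - c2 ^ 2 * c4 ^ 2
      - c3 ^ 2 * c4 ^ 2 := by
    nlinarith [mul_pos (sub_pos.2 ha) (sub_pos.2 hbc),
      mul_nonneg (mul_nonneg (sq_nonneg c2) (sub_nonneg.2 hb.le)) (sub_nonneg.2 hc.le)]
  have hK : 0 < θ / (1 - (c2 * c3 * c4) ^ 2) := div_pos hθ (by linarith)
  have hane : (1 : ℝ) - c2 ^ 2 ≠ 0 := by linarith
  have hbcne : (1 : ℝ) - c3 ^ 2 * c4 ^ 2 ≠ 0 := by linarith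
  have hDne : (1 : ℝ) + 2 * (c2 * c3 * c4) ^ 2 - c2 ^ 2 * c3 ^ 2 - c2 ^ 2 * c4 ^ 2
      - c3 ^ 2 * c4 ^ 2 ≠ 0 := ne_of_gt hD
  constructor
  · apply mul_le_mul_of_nonneg_left _ hK.le
    have key : (c2 ^ 2 * c3 ^ 2 + c2 ^ 2 * c4 ^ 2 + c3 ^ 2 * c4 ^ 2
        - 3 * (c2 * c3 * c4) ^ 2) /
        (1 + 2 * (c2 * c3 * c4) ^ 2 - c2 ^ 2 * c3 ^ 2 - c2 ^ 2 * c4 ^ 2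
          - c3 ^ 2 * c4 ^ 2) + 2 ≤ 1 / (1 - c2 ^ 2) + 1 / (1 - c3 ^ 2 * c4 ^ 2) := by
      rw [div_add' _ _ _ hDne, div_add_div _ _ hane hbcne, div_le_div_iff₀ hD
        (mul_pos (by linarith) (by linarith) : (0:ℝ) < (1 - c2 ^ 2) * (1 - c3 ^ 2 * c4 ^ 2))]
      nlinarith [mul_nonneg (mul_nonneg (mul_nonneg
        (sub_nonneg.2 habc.le) (sq_nonneg c2)) (sub_nonneg.2 hb.le)) (sub_nonneg.2 hc.le)]
    linarith
  · intro h0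
    subst h0
    have : (0:ℝ) ^ 2 * c3 ^ 2 + 0 ^ 2 * c4 ^ 2 + c3 ^ 2 * c4 ^ 2
        - 3 * (0 * c3 * c4) ^ 2 = c3 ^ 2 * c4 ^ 2 := by ring
    congr 1
    simp only [ne_eq, OfNat.ofNat_ne_zero, not_false_eq_true, zero_pow, zero_mul, mul_zero, add_zero, sub_zero]
    field_simp
    ring
end

section
/- For all real θ > 0, real I1, and c2, c3, c4 ∈ (−1,1) with h = c2·c3·c4, if c2² ≤ c4², then θ/(1−h²)·[I1−3 + 1/(1−c2²) + 1/(1−c3²c4²)] ≤ θ/(1−h²)·[I1−3 + 1/(1−c2²c3²) + 1/(1−c4²)]; that is, unfolding the pair of modes with the higher collinearity gives the smaller CRIB expression. -/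
/-- Unfolding the pair of modes with the higher collinearity gives the smaller
order-4 rank-2 CRIB expression: if `c2² ≤ c4²` then
`CRIB_{[1,2,(3,4)]} ≤ CRIB_{[1,(2,3),4]}`. -/
theorem crib_order4_unfolding_comparison
    (θ I1 c2 c3 c4 : ℝ) (hθ : 0 < θ)
    (h2 : -1 < c2) (h2' : c2 < 1) (h3 : -1 < c3) (h3' : c3 < 1)
    (h4 : -1 < c4) (h4' : c4 < 1) (hc : c2 ^ 2 ≤ c4 ^ 2) :
    θ / (1 - (c2 * c3 * c4) ^ 2) *
        (I1 - 3 + 1 / (1 - c2 ^ 2) + 1 / (1 - c3 ^ 2 * c4 ^ 2))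
      ≤ θ / (1 - (c2 * c3 * c4) ^ 2) *
          (I1 - 3 + 1 / (1 - c2 ^ 2 * c3 ^ 2) + 1 / (1 - c4 ^ 2)) := by
  have ha : c2 ^ 2 < 1 := by nlinarith
  have hb : c3 ^ 2 < 1 := by nlinarith
  have hd : c4 ^ 2 < 1 := by nlinarith
  have ha0 : 0 ≤ c2 ^ 2 := sq_nonneg _
  have hb0 : 0 ≤ c3 ^ 2 := sq_nonneg _
  have hd0 : 0 ≤ c4 ^ 2 := sq_nonneg _
  have h1 : (0:ℝ) < 1 - c2 ^ 2 := by linarith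
  have h34 : (0:ℝ) < 1 - c3 ^ 2 * c4 ^ 2 := by nlinarith
  have h23 : (0:ℝ) < 1 - c2 ^ 2 * c3 ^ 2 := by nlinarith
  have h4p : (0:ℝ) < 1 - c4 ^ 2 := by linarith
  have hh : (0:ℝ) < 1 - (c2 * c3 * c4) ^ 2 := by nlinarith
  have hmul : (0:ℝ) < θ / (1 - (c2 * c3 * c4) ^ 2) := div_pos hθ hh
  have key : 1 / (1 - c2 ^ 2) + 1 / (1 - c3 ^ 2 * c4 ^ 2)
      ≤ 1 / (1 - c2 ^ 2 * c3 ^ 2) + 1 / (1 - c4 ^ 2) := by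
    rw [div_add_div _ _ h1.ne' h34.ne', div_add_div _ _ h23.ne' h4p.ne',
      div_le_div_iff₀ (by positivity) (by positivity)]
    nlinarith [mul_nonneg (mul_nonneg (sub_nonneg.2 hc) (sub_nonneg.2 hb.le))
      (sub_nonneg.2 (show c2 ^ 2 * c3 ^ 2 * c4 ^ 2 ≤ 1 by nlinarith)),
      sq_nonneg (c2 * c3 * c4), mul_nonneg ha0 hb0, mul_nonneg hb0 hd0]
  have := mul_le_mul_of_nonneg_left (by linarith : I1 - 3 + (1 / (1 - c2 ^ 2) + 1 / (1 - c3 ^ 2 * c4 ^ 2)) ≤ I1 - 3 + (1 / (1 - c2 ^ 2 * c3 ^ 2) + 1 / (1 - c4 ^ 2))) hmul.le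
  linarith [this]
end

section
/- For all c2, c3, c4 ∈ (−1,1), writing x = c2², y = c3², z = c4² and h = c2·c3·c4: (i) the denominator is positive, 1 + 2h² − (xy + xz + yz) > 0 (indeed 1 + 2xyz − xy − xz − yz = (1−xy)(1−z) + z(1−x)(1−y)); (ii) the numerator is nonnegative, xy + xz + yz − 3h² ≥ 0; and consequently (iii) for every θ > 0 and real I1, θ·(I1−1)/(1−h²) ≤ θ/(1−h²)·[I1−1 + (xy + xz + yz − 3h²)/(1 + 2h² − xy − xz − yz)], with strict inequality whenever at least two of c2, c3, c4 are nonzero. In words, CRIB(a1) at c1 = ±1 is bounded above by CRIB(a1) at c1 = 0. -/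
set_option maxHeartbeats 800000


/-- For `x = c2²`, `y = c3²`, `z = c4²`, `h = c2·c3·c4`:
(i) the denominator `1 + 2h² − (xy+xz+yz)` is positive (via the identity
`1 + 2xyz − xy − xz − yz = (1−xy)(1−z) + z(1−x)(1−y)`);
(ii) the numerator `xy+xz+yz−3h²` is nonnegative; and
(iii) CRIB(a1) at `c1 = ±1` is bounded above by CRIB(a1) at `c1 = 0`,
strictly whenever at least two of `c2, c3, c4` are nonzero. -/
theorem crib_order4_c1_collinear_bound
    (c2 c3 c4 : ℝ)
    (h2 : -1 < c2) (h2' : c2 < 1) (h3 : -1 < c3) (h3' : c3 < 1)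
    (h4 : -1 < c4) (h4' : c4 < 1) :
    (1 + 2 * c2 ^ 2 * (c3 ^ 2 * c4 ^ 2) - c2 ^ 2 * c3 ^ 2 - c2 ^ 2 * c4 ^ 2
        - c3 ^ 2 * c4 ^ 2
      = (1 - c2 ^ 2 * c3 ^ 2) * (1 - c4 ^ 2)
        + c4 ^ 2 * (1 - c2 ^ 2) * (1 - c3 ^ 2)) ∧
    (0 < 1 + 2 * (c2 * c3 * c4) ^ 2 - (c2 ^ 2 * c3 ^ 2 + c2 ^ 2 * c4 ^ 2
        + c3 ^ 2 * c4 ^ 2)) ∧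
    (0 ≤ c2 ^ 2 * c3 ^ 2 + c2 ^ 2 * c4 ^ 2 + c3 ^ 2 * c4 ^ 2
        - 3 * (c2 * c3 * c4) ^ 2) ∧
    (∀ θ I1 : ℝ, 0 < θ →
      θ * (I1 - 1) / (1 - (c2 * c3 * c4) ^ 2)
        ≤ θ / (1 - (c2 * c3 * c4) ^ 2) *
            (I1 - 1 + (c2 ^ 2 * c3 ^ 2 + c2 ^ 2 * c4 ^ 2 + c3 ^ 2 * c4 ^ 2
                  - 3 * (c2 * c3 * c4) ^ 2) /
                (1 + 2 * (c2 * c3 * c4) ^ 2 - c2 ^ 2 * c3 ^ 2 - c2 ^ 2 * c4 ^ 2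
                  - c3 ^ 2 * c4 ^ 2))) ∧
    (∀ θ I1 : ℝ, 0 < θ →
      ((c2 ≠ 0 ∧ c3 ≠ 0) ∨ (c2 ≠ 0 ∧ c4 ≠ 0) ∨ (c3 ≠ 0 ∧ c4 ≠ 0)) →
      θ * (I1 - 1) / (1 - (c2 * c3 * c4) ^ 2)
        < θ / (1 - (c2 * c3 * c4) ^ 2) *
            (I1 - 1 + (c2 ^ 2 * c3 ^ 2 + c2 ^ 2 * c4 ^ 2 + c3 ^ 2 * c4 ^ 2
                  - 3 * (c2 * c3 * c4) ^ 2) /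
                (1 + 2 * (c2 * c3 * c4) ^ 2 - c2 ^ 2 * c3 ^ 2 - c2 ^ 2 * c4 ^ 2
                  - c3 ^ 2 * c4 ^ 2))) := by
  have hx : c2 ^ 2 < 1 := by nlinarith
  have hy : c3 ^ 2 < 1 := by nlinarith
  have hz : c4 ^ 2 < 1 := by nlinarith
  have hx0 : 0 ≤ c2 ^ 2 := sq_nonneg _
  have hy0 : 0 ≤ c3 ^ 2 := sq_nonneg _
  have hz0 : 0 ≤ c4 ^ 2 := sq_nonneg _
  have hxy : 0 < 1 - c2 ^ 2 * c3 ^ 2 := by nlinarith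
  have hkey : (c2 * c3 * c4) ^ 2 = c2 ^ 2 * c3 ^ 2 * c4 ^ 2 := by ring
  have hD : 0 < 1 + 2 * (c2 * c3 * c4) ^ 2 - c2 ^ 2 * c3 ^ 2 - c2 ^ 2 * c4 ^ 2
      - c3 ^ 2 * c4 ^ 2 := by
    have h1 := mul_pos hxy (by linarith : (0:ℝ) < 1 - c4 ^ 2)
    have h2 := mul_nonneg hz0 (le_of_lt (mul_pos (by linarith : (0:ℝ) < 1 - c2 ^ 2)
      (by linarith : (0:ℝ) < 1 - c3 ^ 2)))
    nlinarith [h1, h2]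
  have hN : 0 ≤ c2 ^ 2 * c3 ^ 2 + c2 ^ 2 * c4 ^ 2 + c3 ^ 2 * c4 ^ 2
      - 3 * (c2 * c3 * c4) ^ 2 := by
    have h1 := mul_nonneg (mul_nonneg hx0 hy0) (by linarith : (0:ℝ) ≤ 1 - c4 ^ 2)
    have h2 := mul_nonneg (mul_nonneg hx0 hz0) (by linarith : (0:ℝ) ≤ 1 - c3 ^ 2)
    have h3 := mul_nonneg (mul_nonneg hy0 hz0) (by linarith : (0:ℝ) ≤ 1 - c2 ^ 2)
    nlinarith [h1, h2, h3]
  have hH : 0 < 1 - (c2 * c3 * c4) ^ 2 := by nlinarith [mul_nonneg (mul_nonneg hx0 hy0) hz0]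
  refine ⟨by ring, by linarith, hN, ?_, ?_⟩
  · intro θ I1 hθ
    have heq : θ * (I1 - 1) / (1 - (c2 * c3 * c4) ^ 2)
        = θ / (1 - (c2 * c3 * c4) ^ 2) * (I1 - 1) := by ring
    rw [heq, mul_add]
    have hpos : 0 ≤ θ / (1 - (c2 * c3 * c4) ^ 2) *
        ((c2 ^ 2 * c3 ^ 2 + c2 ^ 2 * c4 ^ 2 + c3 ^ 2 * c4 ^ 2
            - 3 * (c2 * c3 * c4) ^ 2) /
          (1 + 2 * (c2 * c3 * c4) ^ 2 - c2 ^ 2 * c3 ^ 2 - c2 ^ 2 * c4 ^ 2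
            - c3 ^ 2 * c4 ^ 2)) :=
      mul_nonneg (le_of_lt (div_pos hθ hH)) (div_nonneg hN (le_of_lt hD))
    linarith
  · intro θ I1 hθ hne
    have hN' : 0 < c2 ^ 2 * c3 ^ 2 + c2 ^ 2 * c4 ^ 2 + c3 ^ 2 * c4 ^ 2
        - 3 * (c2 * c3 * c4) ^ 2 := by
      have h1 := mul_nonneg (mul_nonneg hx0 hy0) (by linarith : (0:ℝ) ≤ 1 - c4 ^ 2)
      have h2 := mul_nonneg (mul_nonneg hx0 hz0) (by linarith : (0:ℝ) ≤ 1 - c3 ^ 2)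
      have h3 := mul_nonneg (mul_nonneg hy0 hz0) (by linarith : (0:ℝ) ≤ 1 - c2 ^ 2)
      rcases hne with ⟨a, b⟩ | ⟨a, b⟩ | ⟨a, b⟩
      · have ha : 0 < c2 ^ 2 := by positivity
        have hb : 0 < c3 ^ 2 := by positivity
        nlinarith [mul_pos (mul_pos ha hb) (by linarith : (0:ℝ) < 1 - c4 ^ 2)]
      · have ha : 0 < c2 ^ 2 := by positivity
        have hb : 0 < c4 ^ 2 := by positivity
        nlinarith [mul_pos (mul_pos ha hb) (by linarith : (0:ℝ) < 1 - c3 ^ 2)]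
      · have ha : 0 < c3 ^ 2 := by positivity
        have hb : 0 < c4 ^ 2 := by positivity
        nlinarith [mul_pos (mul_pos ha hb) (by linarith : (0:ℝ) < 1 - c2 ^ 2)]
    have heq : θ * (I1 - 1) / (1 - (c2 * c3 * c4) ^ 2)
        = θ / (1 - (c2 * c3 * c4) ^ 2) * (I1 - 1) := by ring
    rw [heq, mul_add]
    have hpos : 0 < θ / (1 - (c2 * c3 * c4) ^ 2) *
        ((c2 ^ 2 * c3 ^ 2 + c2 ^ 2 * c4 ^ 2 + c3 ^ 2 * c4 ^ 2
            - 3 * (c2 * c3 * c4) ^ 2) /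
          (1 + 2 * (c2 * c3 * c4) ^ 2 - c2 ^ 2 * c3 ^ 2 - c2 ^ 2 * c4 ^ 2
            - c3 ^ 2 * c4 ^ 2)) :=
      mul_pos (div_pos hθ hH) (div_pos hN' hD)
    linarith
end

section
/- For all real θ > 0, real I1, and c2, c3, c4, c5 ∈ (−1,1) with h = c2·c3·c4·c5, if c2² ≤ c4²·c5², then θ/(1−h²)·[I1−3 + 1/(1−c2²) + 1/(1−c3²c4²c5²)] ≤ θ/(1−h²)·[I1−3 + 1/(1−c2²c3²) + 1/(1−c4²c5²)]. -/
lemma crib_aux {a b d : ℝ} (ha : 0 ≤ a) (hb : 0 ≤ b) (hd : 0 ≤ d)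
    (ha1 : a < 1) (hb1 : b < 1) (hd1 : d < 1) (had : a ≤ d) :
    1 / (1 - a) + 1 / (1 - b * d) ≤ 1 / (1 - a * b) + 1 / (1 - d) := by
  have h1 : 0 < 1 - a := by linarith
  have h2 : 0 < 1 - b * d := by nlinarith
  have h3 : 0 < 1 - a * b := by nlinarith
  have h4 : 0 < 1 - d := by linarith
  rw [div_add_div _ _ (ne_of_gt h1) (ne_of_gt h2), div_add_div _ _ (ne_of_gt h3) (ne_of_gt h4),
    div_le_div_iff₀ (by positivity) (by positivity)]
  nlinarith [mul_nonneg (mul_nonneg (sub_nonneg.2 hb1.le) (sub_nonneg.2 had)) (sub_nonneg.2 (show a*b*d ≤ 1 by nlinarith)), sq_nonneg (a*b*d)]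

/-- Order-5 rank-2 unfolding comparison: if `c2² ≤ c4²·c5²` then
`CRIB_{[1,2,(3,4,5)]} ≤ CRIB_{[1,(2,3),(4,5)]}`. -/
theorem crib_order5_unfolding_comparison
    (θ I1 c2 c3 c4 c5 : ℝ) (hθ : 0 < θ)
    (h2 : -1 < c2) (h2' : c2 < 1) (h3 : -1 < c3) (h3' : c3 < 1)
    (h4 : -1 < c4) (h4' : c4 < 1) (h5 : -1 < c5) (h5' : c5 < 1)
    (hc : c2 ^ 2 ≤ c4 ^ 2 * c5 ^ 2) :
    θ / (1 - (c2 * c3 * c4 * c5) ^ 2) *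
        (I1 - 3 + 1 / (1 - c2 ^ 2) + 1 / (1 - c3 ^ 2 * c4 ^ 2 * c5 ^ 2))
      ≤ θ / (1 - (c2 * c3 * c4 * c5) ^ 2) *
          (I1 - 3 + 1 / (1 - c2 ^ 2 * c3 ^ 2) + 1 / (1 - c4 ^ 2 * c5 ^ 2)) := by
  have s2 : c2 ^ 2 < 1 := by nlinarith
  have s3 : c3 ^ 2 < 1 := by nlinarith
  have s4 : c4 ^ 2 < 1 := by nlinarith
  have s5 : c5 ^ 2 < 1 := by nlinarith
  have hd : c4 ^ 2 * c5 ^ 2 < 1 := by nlinarith [sq_nonneg c4, sq_nonneg c5]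
  have key := crib_aux (sq_nonneg c2) (sq_nonneg c3)
    (mul_nonneg (sq_nonneg c4) (sq_nonneg c5)) s2 s3 hd hc
  have hden : 0 < 1 - (c2 * c3 * c4 * c5) ^ 2 := by
    nlinarith [sq_nonneg (c2*c3*c4*c5), sq_nonneg c2, sq_nonneg c3, sq_nonneg c4, sq_nonneg c5,
      mul_nonneg (sq_nonneg c2) (sq_nonneg c3), mul_nonneg (mul_nonneg (sq_nonneg c2) (sq_nonneg c3)) (sq_nonneg c4)]
  have hpos : 0 ≤ θ / (1 - (c2 * c3 * c4 * c5) ^ 2) := by positivity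
  apply mul_le_mul_of_nonneg_left _ hpos
  have : c3 ^ 2 * (c4 ^ 2 * c5 ^ 2) = c3 ^ 2 * c4 ^ 2 * c5 ^ 2 := by ring
  rw [this] at key
  linarith
end

section
/- Matricized Kruskal tensor times Khatri-Rao product (the fast CP gradient identity): let ι : Fin N → Type be nonempty finite types, λ : Fin R → ℝ, B_n : ι n → Fin R → ℝ and A_n : ι n → Fin S → ℝ for each n, and fix a mode m : Fin N. Then for every i_m : ι m and s : Fin S, Σ over all j : Π (n ≠ m), ι n of [ (Σ_{r} λ_r · B_m(i_m, r) · Π_{n ≠ m} B_n(j n, r)) · Π_{n ≠ m} A_n(j n, s) ] = Σ_{r} λ_r · B_m(i_m, r) · Π_{n ≠ m} ( Σ_{t : ι n} B_n(t, r) · A_n(t, s) ). In matrix form, the mode-m unfolding of the Kruskal tensor multiplied by the Khatri-Rao product of the A_n equals B_m · diag(λ) · (⊛_{n ≠ m} B_nᵀ A_n), the Hadamard product of the cross-Gram matrices. -/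
/-- Fast CP gradient identity: the mode-`m` matricization of a Kruskal tensor
multiplied by the Khatri-Rao product of the `A n` (over `n ≠ m`) equals
`B m · diag(λ)` times the Hadamard product of the cross-Gram matrices. -/
theorem kruskal_matricization_khatri_rao
    {N R S : ℕ} (ι : Fin N → Type) [∀ n, Fintype (ι n)] [∀ n, Nonempty (ι n)]
    (lam : Fin R → ℝ) (B : ∀ n, ι n → Fin R → ℝ) (A : ∀ n, ι n → Fin S → ℝ)
    (m : Fin N) (im : ι m) (s : Fin S) :
    ∑ j : (∀ n : {n : Fin N // n ≠ m}, ι n.1),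
        (∑ r : Fin R, lam r * B m im r * ∏ n : {n : Fin N // n ≠ m}, B n.1 (j n) r) *
          ∏ n : {n : Fin N // n ≠ m}, A n.1 (j n) s
      = ∑ r : Fin R, lam r * B m im r *
          ∏ n : {n : Fin N // n ≠ m}, (∑ t : ι n.1, B n.1 t r * A n.1 t s) := by
  simp only [Finset.sum_mul, Finset.prod_univ_sum]
  rw [Finset.sum_comm]
  refine Finset.sum_congr rfl fun r _ => ?_
  rw [Finset.mul_sum]
  refine Finset.sum_congr rfl fun j _ => ?_
  rw [mul_assoc, ← Finset.prod_mul_distrib]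
end
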